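/- In an inner product category, for an isomorphism h : X → Y the following are equivalent: (i) both h and h* are isometries; (ii) h (equivalently h^{-1}) is an isometry; (iii) h† = φ_Y^{-1} h^{-1} φ_X (equivalently h = φ_X (h^{-1})† φ_Y^{-1}); (iv) h^{-1} = h*. -/

import Mathlib

open CategoryTheory

universe v u

/-- An (achiral) involutive category: a contravariant endofunctor `(−)†`
together with a natural isomorphism `ι : X → X††` satisfying `ι_{X†} ≫ (ι_X)† = 1`. -/
structure Involutive (C : Type u) [Category.{v} C] where
  dob : C → C
  dmap : ∀ {X Y : C}, (X ⟶ Y) → (dob Y ⟶ dob X)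
  dmap_id : ∀ X : C, dmap (𝟙 X) = 𝟙 (dob X)
  dmap_comp : ∀ {X Y Z : C} (f : X ⟶ Y) (g : Y ⟶ Z), dmap (f ≫ g) = dmap g ≫ dmap f
  ι : ∀ X : C, X ⟶ dob (dob X)
  ιinv : ∀ X : C, dob (dob X) ⟶ X
  ι_hom_inv : ∀ X : C, ι X ≫ ιinv X = 𝟙 X
  ι_inv_hom : ∀ X : C, ιinv X ≫ ι X = 𝟙 (dob (dob X))
  ι_natural : ∀ {X Y : C} (f : X ⟶ Y), f ≫ ι Y = ι X ≫ dmap (dmap f)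
  ι_dagger : ∀ X : C, ι (dob X) ≫ dmap (ι X) = 𝟙 (dob X)

/-- A unitary structure on an involutive category: isomorphisms `φ_X : X → X†`
with `φ_{X†} = (φ_X⁻¹)†` and `φ_X ≫ φ_{X†} = ι_X`. -/
structure UnitaryStruct {C : Type u} [Category.{v} C] (D : Involutive C) where
  φ : ∀ X : C, X ⟶ D.dob X
  φinv : ∀ X : C, D.dob X ⟶ X
  φ_hom_inv : ∀ X : C, φ X ≫ φinv X = 𝟙 X
  φ_inv_hom : ∀ X : C, φinv X ≫ φ X = 𝟙 (D.dob X)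
  u1 : ∀ X : C, φ (D.dob X) = D.dmap (φinv X)
  u2 : ∀ X : C, φ X ≫ φ (D.dob X) = D.ι X

/-- An inner product combinator on an involutive category. -/
structure IPStruct {C : Type u} [Category.{v} C] (D : Involutive C) where
  ip : ∀ {A B X : C}, (A ⟶ X) → (B ⟶ X) → (A ⟶ D.dob B)

/-- The dual inner product `⟨h|k⟩^ι := ι_{A†} ≫ ⟨k†|h†⟩† ≫ ι_B⁻¹`. -/
def IPStruct.dual {C : Type u} [Category.{v} C] {D : Involutive C} (S : IPStruct D)
    {X A B : C} (h : X ⟶ A) (k : X ⟶ B) : D.dob A ⟶ B :=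
  D.ι (D.dob A) ≫ D.dmap (S.ip (D.dmap k) (D.dmap h)) ≫ D.ιinv B

/-- An inner product category: axioms [IP.1]–[IP.4]. -/
structure InnerProduct {C : Type u} [Category.{v} C] (D : Involutive C) extends IPStruct D where
  ip1 : ∀ {A B X Y Z : C} (f : A ⟶ X) (g : B ⟶ X) (h : Y ⟶ A) (k : Z ⟶ B),
    ip (h ≫ f) (k ≫ g) = h ≫ ip f g ≫ D.dmap k
  ip2a : ∀ {A B X : C} (f : A ⟶ X) (g : B ⟶ X),
    D.ι A ≫ toIPStruct.dual (D.dmap f) (D.dmap g) = ip f g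
  ip2b : ∀ {A B X : C} (f : A ⟶ X) (g : B ⟶ X),
    D.ι B ≫ D.dmap (ip f g) = ip g f
  ip3 : ∀ {A B X : C} (f : A ⟶ X) (g : B ⟶ X) (h k : X ⟶ B),
    h ≫ g = 𝟙 X → ip f g ≫ toIPStruct.dual h k = f ≫ k
  ip4 : ∀ {A X Z : C} (f : A ⟶ Z) (g : A ⟶ X) (h k : X ⟶ A),
    g ≫ h = 𝟙 A → toIPStruct.dual f g ≫ ip h k = D.dmap (k ≫ f)

/-- The inner product induced by a unitary structure: `⟨f|g⟩ := f ≫ φ_X ≫ g†`. -/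
def UnitaryStruct.uip {C : Type u} [Category.{v} C] {D : Involutive C} (U : UnitaryStruct D)
    {A B X : C} (f : A ⟶ X) (g : B ⟶ X) : A ⟶ D.dob B :=
  f ≫ U.φ X ≫ D.dmap g

/-- The dual inner product induced by a unitary structure. -/
def UnitaryStruct.udual {C : Type u} [Category.{v} C] {D : Involutive C} (U : UnitaryStruct D)
    {X A B : C} (h : X ⟶ A) (k : X ⟶ B) : D.dob A ⟶ B :=
  D.ι (D.dob A) ≫ D.dmap (U.uip (D.dmap k) (D.dmap h)) ≫ D.ιinv B

/-- The inner adjoint `f* := φ_B ≫ f† ≫ φ_A⁻¹` of `f : A ⟶ B`. -/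
def UnitaryStruct.adj {C : Type u} [Category.{v} C] {D : Involutive C} (U : UnitaryStruct D)
    {A B : C} (f : A ⟶ B) : B ⟶ A :=
  U.φ B ≫ D.dmap f ≫ U.φinv A

/-- An isometry: `⟨fh|gh⟩ = ⟨f|g⟩` for all maps into the domain of `h`. -/
def IsIsometry {C : Type u} [Category.{v} C] {D : Involutive C} (U : UnitaryStruct D)
    {X Y : C} (h : X ⟶ Y) : Prop :=
  ∀ (A B : C) (f : A ⟶ X) (g : B ⟶ X), U.uip (f ≫ h) (g ≫ h) = U.uip f g

/-!
Testing the isometry condition on identities shows that `h` is an isometry iff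
`h ≫ φ_Y ≫ h† = φ_X`; for an isomorphism this rearranges to `h⁻¹ = h*`. Since `h*` is `h†`
conjugated by `φ`, this is the first half of (iii), and applied to `h⁻¹` it is the second half.
An inverse of an isometry is again an isometry, which ties the conditions together.
-/

namespace UnitaryStruct

variable {C : Type u} [Category.{v} C] {D : Involutive C} (U : UnitaryStruct D)

def φIso (X : C) : X ≅ D.dob X := ⟨U.φ X, U.φinv X, U.φ_hom_inv X, U.φ_inv_hom X⟩

theorem eq_φ_comp_comp_φinv_iff {X Y : C} (a : D.dob X ⟶ D.dob Y) (b : X ⟶ Y) :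
    b = U.φ X ≫ a ≫ U.φinv Y ↔ a = U.φinv X ≫ b ≫ U.φ Y := by
  constructor <;> rintro rfl <;>
    simp [reassoc_of% U.φ_hom_inv, reassoc_of% U.φ_inv_hom, U.φ_hom_inv, U.φ_inv_hom]

end UnitaryStruct

section Isometry

variable {C : Type u} [Category.{v} C] {D : Involutive C} (U : UnitaryStruct D)

theorem isIsometry_iff {X Y : C} (h : X ⟶ Y) :
    IsIsometry U h ↔ h ≫ U.φ Y ≫ D.dmap h = U.φ X := by
  refine ⟨fun H => by simpa [UnitaryStruct.uip, D.dmap_id] using H X X (𝟙 X) (𝟙 X), ?_⟩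
  intro E A B f g
  simp [UnitaryStruct.uip, D.dmap_comp, reassoc_of% E]

variable {U} in
theorem IsIsometry.of_comp_eq_id {X Y : C} {h : X ⟶ Y} {s : Y ⟶ X} (H : IsIsometry U h)
    (hs : s ≫ h = 𝟙 Y) : IsIsometry U s := fun A B f g => by
  simpa [hs] using (H A B (f ≫ s) (g ≫ s)).symm

theorem isIsometry_iff_inv_eq_adj {X Y : C} (e : X ≅ Y) :
    IsIsometry U e.hom ↔ e.inv = U.adj e.hom :=
  calc IsIsometry U e.hom ↔ e.hom ≫ U.φ Y ≫ D.dmap e.hom = U.φ X := isIsometry_iff U e.hom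
    _ ↔ U.φ Y ≫ D.dmap e.hom = e.inv ≫ U.φ X := e.eq_inv_comp.symm
    _ ↔ U.adj e.hom = e.inv := by
      rw [UnitaryStruct.adj, ← Category.assoc]
      exact (U.φIso X).comp_inv_eq.symm
    _ ↔ e.inv = U.adj e.hom := eq_comm

end Isometry

/-- For an isomorphism `h : X ⟶ Y` (with inverse `hinv`) in an inner product category
the following are equivalent: (i) both `h` and `h*` are isometries;
(ii) `h` (equivalently `h⁻¹`) is an isometry;
(iii) `h† = φ_Y⁻¹ ≫ h⁻¹ ≫ φ_X` (equivalently `h = φ_X ≫ (h⁻¹)† ≫ φ_Y⁻¹`);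
(iv) `h⁻¹ = h*`. -/
theorem unitary_iso_characterization {C : Type u} [Category.{v} C]
    (D : Involutive C) (U : UnitaryStruct D) {X Y : C}
    (h : X ⟶ Y) (hinv : Y ⟶ X)
    (hh : h ≫ hinv = 𝟙 X) (hh' : hinv ≫ h = 𝟙 Y) :
    ((IsIsometry U h ∧ IsIsometry U (U.adj h)) ↔ (IsIsometry U h ∨ IsIsometry U hinv)) ∧
    ((IsIsometry U h ∨ IsIsometry U hinv) ↔
      (D.dmap h = U.φinv Y ≫ hinv ≫ U.φ X ∧ h = U.φ X ≫ D.dmap hinv ≫ U.φinv Y)) ∧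
    ((D.dmap h = U.φinv Y ≫ hinv ≫ U.φ X ∧ h = U.φ X ≫ D.dmap hinv ≫ U.φinv Y) ↔
      hinv = U.adj h) := by
  let e : X ≅ Y := ⟨h, hinv, hh, hh'⟩
  have hom_iff : IsIsometry U h ↔ hinv = U.adj h := isIsometry_iff_inv_eq_adj U e
  have inv_iff : IsIsometry U hinv ↔ h = U.φ X ≫ D.dmap hinv ≫ U.φinv Y :=
    isIsometry_iff_inv_eq_adj U e.symm
  have adj_iff : hinv = U.adj h ↔ D.dmap h = U.φinv Y ≫ hinv ≫ U.φ X :=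
    U.eq_φ_comp_comp_φinv_iff (D.dmap h) hinv
  have hom_inv : IsIsometry U h → IsIsometry U hinv := (·.of_comp_eq_id hh')
  have inv_hom : IsIsometry U hinv → IsIsometry U h := (·.of_comp_eq_id hh)
  have adj_of_hom : IsIsometry U h → IsIsometry U (U.adj h) := fun H => hom_iff.mp H ▸ hom_inv H
  rw [← inv_iff, ← adj_iff, ← hom_iff]
  tauto
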